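/- arXiv:2602.23144 — 3 statements merged into one kernel-verified Lean document; each statement's English description precedes it below -/
import Mathlib

section
/- Let H be a finite-dimensional complex Hilbert space of dimension d, let π be a positive semidefinite Hermitian operator on H with eigendecomposition π = Σ_i π_i |γ_i⟩⟨γ_i|, and let W be a Hermitian operator with eigendecomposition W = Σ_j W_j |ξ_j⟩⟨ξ_j|. Let φ: [0,∞) → ℝ be convex and superlinear and ψ = φ* its Legendre transform. Then Tr[Wπ] ≤ Tr[φ(π)] + Tr[ψ(W)], where φ(π) and ψ(W) are defined by functional calculus. -/
open scoped ComplexOrder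

open Matrix Filter Topology

/-- Trace of `g` applied to a Hermitian matrix via functional calculus
(junk value `0` on non-Hermitian matrices). -/
noncomputable def traceFun {n : Type*} [Fintype n] [DecidableEq n]
    (g : ℝ → ℝ) (A : Matrix n n ℂ) : ℝ :=
  if h : A.IsHermitian then ∑ i, g (h.eigenvalues i) else 0

/-- The Legendre transform of `φ : [0,∞) → ℝ`, i.e. `ψ t = sup_{x ≥ 0} (t x - φ x)`. -/
noncomputable def legendre (φ : ℝ → ℝ) (t : ℝ) : ℝ :=
  sSup ((fun x => t * x - φ x) '' Set.Ici 0)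

/-!
With `W = ∑ wᵢ |ξᵢ⟩⟨ξᵢ|` and `π = ∑ pⱼ |γⱼ⟩⟨γⱼ|` one has `Tr[Wπ] = ∑ᵢⱼ wᵢ pⱼ |⟨ξᵢ, γⱼ⟩|²`, and the
overlap matrix `|⟨ξᵢ, γⱼ⟩|²` is doubly stochastic, being the entrywise squared modulus of the
unitary change of basis. The scalar Fenchel–Young inequality `wᵢ pⱼ ≤ φ(pⱼ) + ψ(wᵢ)` applied
termwise then sums, row by row and column by column, to `Tr φ(π) + Tr ψ(W)`.

Since `legendre` is a real `sSup`, Fenchel–Young needs the set `{t x - φ x | x ≥ 0}` to be bounded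
above: superlinearity controls large `x`, and convexity bounds `φ` below on the remaining
compact interval.
-/

section

open Set

lemma ConvexOn.bddBelow_image_Icc {f : ℝ → ℝ} {a b : ℝ} (hf : ConvexOn ℝ (Icc a b) f) :
    BddBelow (f '' Icc a b) := by
  refine ⟨2 * f ((a + b) / 2) - max (f a) (f b), ?_⟩
  rintro _ ⟨x, hx, rfl⟩
  have hab : a ≤ b := hx.1.trans hx.2
  have hx' : a + b - x ∈ Icc a b := ⟨by linarith [hx.2], by linarith [hx.1]⟩
  have hmid : f ((a + b) / 2) ≤ 2⁻¹ * f x + 2⁻¹ * f (a + b - x) := by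
    have h := hf.2 hx hx' (inv_nonneg.mpr zero_le_two) (inv_nonneg.mpr zero_le_two)
      (by norm_num : (2⁻¹ + 2⁻¹ : ℝ) = 1)
    rwa [smul_eq_mul, smul_eq_mul, smul_eq_mul, smul_eq_mul, ← mul_add, add_sub_cancel,
      inv_mul_eq_div] at h
  have hmax : f (a + b - x) ≤ max (f a) (f b) :=
    hf.le_on_segment (left_mem_Icc.mpr hab) (right_mem_Icc.mpr hab)
      (by rwa [segment_eq_Icc hab])
  linarith

lemma bddAbove_image_mul_sub_Ici {φ : ℝ → ℝ} (hconv : ConvexOn ℝ (Ici 0) φ)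
    (hsl : Tendsto (fun x => φ x / x) atTop atTop) (t : ℝ) :
    BddAbove ((fun x => t * x - φ x) '' Ici 0) := by
  obtain ⟨M₀, hM₀⟩ := (hsl.eventually_ge_atTop t).exists_forall_of_atTop
  set M := max M₀ 1
  obtain ⟨m, hm⟩ := (hconv.subset Icc_subset_Ici_self (convex_Icc 0 M)).bddBelow_image_Icc
  refine ⟨max 0 (|t| * M - m), ?_⟩
  rintro _ ⟨x, hx, rfl⟩
  rcases le_or_gt x M with hxM | hMx
  · have hφx : m ≤ φ x := hm (mem_image_of_mem φ ⟨hx, hxM⟩)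
    have htx : t * x ≤ |t| * M := mul_le_mul (le_abs_self t) hxM hx (abs_nonneg t)
    exact le_max_of_le_right (by linarith)
  · have hx₀ : 0 < x := zero_lt_one.trans_le ((le_max_right M₀ 1).trans hMx.le)
    have htx : t * x ≤ φ x := (le_div_iff₀ hx₀).mp (hM₀ x ((le_max_left M₀ 1).trans hMx.le))
    exact le_max_of_le_left (by linarith)

lemma mul_le_add_legendre {φ : ℝ → ℝ} (hconv : ConvexOn ℝ (Ici 0) φ)
    (hsl : Tendsto (fun x => φ x / x) atTop atTop) {x : ℝ} (hx : 0 ≤ x) (t : ℝ) :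
    t * x ≤ φ x + legendre φ t :=
  sub_le_iff_le_add'.mp <| le_csSup (bddAbove_image_mul_sub_Ici hconv hsl t) (mem_image_of_mem _ hx)

end

namespace Matrix

variable {n 𝕜 : Type*} [Fintype n] [DecidableEq n] [RCLike 𝕜]

lemma sum_norm_sq_row_of_mem_unitaryGroup {U : Matrix n n 𝕜} (hU : U ∈ unitaryGroup n 𝕜)
    (i : n) : ∑ j, ‖U i j‖ ^ 2 = 1 := by
  have h := congr_fun₂ (mem_unitaryGroup_iff.mp hU) i i
  simp only [mul_apply, star_apply, RCLike.star_def, RCLike.mul_conj, one_apply_eq] at h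
  exact_mod_cast h

lemma sum_norm_sq_col_of_mem_unitaryGroup {U : Matrix n n 𝕜} (hU : U ∈ unitaryGroup n 𝕜)
    (j : n) : ∑ i, ‖U i j‖ ^ 2 = 1 := by
  simpa [star_apply] using sum_norm_sq_row_of_mem_unitaryGroup (Unitary.star_mem hU) j

lemma of_norm_sq_mem_doublyStochastic {U : Matrix n n 𝕜} (hU : U ∈ unitaryGroup n 𝕜) :
    of (fun i j => ‖U i j‖ ^ 2) ∈ doublyStochastic ℝ n :=
  mem_doublyStochastic_iff_sum.mpr ⟨fun i j => sq_nonneg ‖U i j‖,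
    sum_norm_sq_row_of_mem_unitaryGroup hU, sum_norm_sq_col_of_mem_unitaryGroup hU⟩

lemma sum_sum_mul_le_of_mem_doublyStochastic {q : Matrix n n ℝ} (hq : q ∈ doublyStochastic ℝ n)
    {c : n → n → ℝ} {x y : n → ℝ} (hc : ∀ i j, c i j ≤ x i + y j) :
    ∑ i, ∑ j, c i j * q i j ≤ ∑ i, x i + ∑ j, y j := by
  obtain ⟨hq₀, hrow, hcol⟩ := mem_doublyStochastic_iff_sum.mp hq
  calc ∑ i, ∑ j, c i j * q i j ≤ ∑ i, ∑ j, (x i + y j) * q i j := by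
        gcongr with i _ j _
        exacts [hq₀ i j, hc i j]
    _ = ∑ i, x i * ∑ j, q i j + ∑ j, y j * ∑ i, q i j := by
        simp only [add_mul, Finset.sum_add_distrib, Finset.mul_sum]
        rw [Finset.sum_comm (f := fun i j => y j * q i j)]
    _ = ∑ i, x i + ∑ j, y j := by simp only [hrow, hcol, mul_one]

lemma re_trace_diagonal_mul_mul_diagonal_mul_star (a b : n → ℝ) (P : Matrix n n 𝕜) :
    RCLike.re (trace (diagonal (RCLike.ofReal ∘ a) * P * diagonal (RCLike.ofReal ∘ b) * star P)) =
      ∑ i, ∑ j, a i * b j * ‖P i j‖ ^ 2 := by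
  simp only [trace, diag_apply, mul_apply (M := _ * _ * _), mul_diagonal, diagonal_mul, star_apply,
    map_sum]
  refine Finset.sum_congr rfl fun i _ => Finset.sum_congr rfl fun j _ => ?_
  have h : (a i : 𝕜) * P i j * b j * star (P i j) = ((a i * b j * ‖P i j‖ ^ 2 : ℝ) : 𝕜) := by
    push_cast
    rw [← RCLike.mul_conj, ← RCLike.star_def]
    ring
  exact (congrArg RCLike.re h).trans (RCLike.ofReal_re _)

lemma IsHermitian.trace_mul_eq_trace_diagonal_mul_diagonal {A B : Matrix n n 𝕜}
    (hA : A.IsHermitian) (hB : B.IsHermitian) :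
    trace (A * B) =
      trace (diagonal (RCLike.ofReal ∘ hA.eigenvalues) *
        (star (hA.eigenvectorUnitary : Matrix n n 𝕜) * (hB.eigenvectorUnitary : Matrix n n 𝕜)) *
        diagonal (RCLike.ofReal ∘ hB.eigenvalues) *
        star (star (hA.eigenvectorUnitary : Matrix n n 𝕜) *
          (hB.eigenvectorUnitary : Matrix n n 𝕜))) := by
  conv_lhs => rw [hA.spectral_theorem, hB.spectral_theorem, Unitary.conjStarAlgAut_apply,
    Unitary.conjStarAlgAut_apply]
  simp only [star_mul, star_star, mul_assoc]
  rw [trace_mul_comm (hA.eigenvectorUnitary : Matrix n n 𝕜)]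
  simp only [mul_assoc]

end Matrix

/-- Trace Fenchel–Young inequality: `Tr[Wπ] ≤ Tr[φ(π)] + Tr[ψ(W)]` for `π` positive
semidefinite, `W` Hermitian, `φ` convex superlinear on `[0,∞)` and `ψ = φ*`. -/
theorem stmt2 {d : ℕ} (φ : ℝ → ℝ) (hconv : ConvexOn ℝ (Set.Ici 0) φ)
    (hsl : Tendsto (fun t => φ t / t) atTop atTop)
    (π W : Matrix (Fin d) (Fin d) ℂ) (hπ : π.PosSemidef) (hW : W.IsHermitian) :
    (Matrix.trace (W * π)).re ≤ traceFun φ π + traceFun (legendre φ) W := by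
  have hπH : π.IsHermitian := hπ.isHermitian
  have hP : star (hW.eigenvectorUnitary : Matrix (Fin d) (Fin d) ℂ) *
      (hπH.eigenvectorUnitary : Matrix (Fin d) (Fin d) ℂ) ∈ unitaryGroup (Fin d) ℂ :=
    mul_mem (Unitary.star_mem hW.eigenvectorUnitary.2) hπH.eigenvectorUnitary.2
  rw [hW.trace_mul_eq_trace_diagonal_mul_diagonal hπH, ← RCLike.re_to_complex,
    re_trace_diagonal_mul_mul_diagonal_mul_star, traceFun, traceFun, dif_pos hπH, dif_pos hW, add_comm]
  exact sum_sum_mul_le_of_mem_doublyStochastic (of_norm_sq_mem_doublyStochastic hP) fun i j =>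
    (mul_le_add_legendre hconv hsl (hπ.eigenvalues_nonneg j) (hW.eigenvalues i)).trans_eq
      (add_comm _ _)
end

section
/- Let φ: [0,∞) → ℝ be convex, superlinear at infinity, with Legendre transform ψ. For every Hermitian matrix W on a finite-dimensional Hilbert space, sup over positive semidefinite Hermitian π of (Tr[Wπ] − Tr[φ(π)]) equals Tr[ψ(W)]. -/
open scoped ComplexOrder

open Matrix Filter Topology

/-! Diagonalise `W = ∑ tᵢ |uᵢ⟩⟨uᵢ|` and let `qᵢ = ⟨uᵢ, π uᵢ⟩ ≥ 0`. Then `Tr[Wπ] = ∑ tᵢ qᵢ`, and the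
Peierls inequality `∑ φ(qᵢ) ≤ Tr[φ(π)]` (Jensen's inequality along the doubly stochastic matrix
`|⟨uᵢ, vⱼ⟩|²` linking the eigenbases of `W` and `π`) bounds the objective by
`∑ (tᵢ qᵢ - φ(qᵢ)) ≤ ∑ ψ(tᵢ)`; convexity and superlinearity of `φ` make each `ψ(tᵢ)` finite.
Conversely, if `x(t) ≥ 0` nearly maximises `t x - φ x`, then `π = x(W)` comes within any `ε`
of `Tr[ψ(W)]`. -/

section Legendre

variable {φ : ℝ → ℝ}

lemma ConvexOn.bddBelow_image_Icc_s3 (hφ : ConvexOn ℝ (Set.Ici 0) φ) (M : ℝ) :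
    BddBelow (φ '' Set.Icc 0 M) := by
  set s := φ (M + 2) - φ (M + 1)
  refine ⟨φ (M + 1) - |s| * (M + 1), ?_⟩
  rintro _ ⟨x, ⟨hx0, hxM⟩, rfl⟩
  have hslope := hφ.slope_mono_adjacent (x := x) (y := M + 1) (z := M + 2) hx0
    (by simp only [Set.mem_Ici]; linarith) (by linarith) (by linarith)
  rw [show M + 2 - (M + 1) = (1 : ℝ) by ring, div_one, div_le_iff₀ (by linarith)] at hslope
  nlinarith [le_abs_self s, abs_nonneg s]

lemma legendre_bddAbove (hconv : ConvexOn ℝ (Set.Ici 0) φ)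
    (hsl : Tendsto (fun x => φ x / x) atTop atTop) (t : ℝ) :
    BddAbove ((fun x => t * x - φ x) '' Set.Ici 0) := by
  obtain ⟨M₀, hM₀⟩ := eventually_atTop.mp (hsl.eventually_ge_atTop t)
  set M := max M₀ 1
  obtain ⟨m, hm⟩ := hconv.bddBelow_image_Icc_s3 M
  refine ⟨max 0 (|t| * M - m), ?_⟩
  rintro _ ⟨x, hx0, rfl⟩
  rcases le_or_gt x M with hxM | hMx
  · have hφx : m ≤ φ x := hm ⟨x, ⟨hx0, hxM⟩, rfl⟩
    have htx : t * x ≤ |t| * M :=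
      (mul_le_mul_of_nonneg_right (le_abs_self t) hx0).trans
        (mul_le_mul_of_nonneg_left hxM (abs_nonneg t))
    exact le_max_of_le_right (by linarith)
  · have hx1 : 0 < x := lt_of_lt_of_le one_pos ((le_max_right _ _).trans hMx.le)
    have ht := hM₀ x ((le_max_left _ _).trans hMx.le)
    rw [le_div_iff₀ hx1] at ht
    exact le_max_of_le_left (by linarith)

lemma le_legendre (hconv : ConvexOn ℝ (Set.Ici 0) φ)
    (hsl : Tendsto (fun x => φ x / x) atTop atTop) (t : ℝ) {x : ℝ} (hx : 0 ≤ x) :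
    t * x - φ x ≤ legendre φ t :=
  le_csSup (legendre_bddAbove hconv hsl t) ⟨x, hx, rfl⟩

lemma exists_nonneg_legendre_sub_lt (t : ℝ) {δ : ℝ} (hδ : 0 < δ) :
    ∃ x, 0 ≤ x ∧ legendre φ t - δ < t * x - φ x := by
  obtain ⟨_, ⟨x, hx, rfl⟩, hlt⟩ := exists_lt_of_lt_csSup
    (Set.nonempty_Ici.image (fun x => t * x - φ x)) (sub_lt_self (legendre φ t) hδ)
  exact ⟨x, hx, hlt⟩

end Legendre

section DoublyStochastic

variable {n : Type*} [Fintype n] [DecidableEq n]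

lemma ConvexOn.sum_map_mulVec_le {s : Set ℝ} {φ : ℝ → ℝ} (hφ : ConvexOn ℝ s φ)
    {M : Matrix n n ℝ} (hM : M ∈ doublyStochastic ℝ n) {x : n → ℝ} (hx : ∀ i, x i ∈ s) :
    ∑ i, φ ((M *ᵥ x) i) ≤ ∑ i, φ (x i) := by
  obtain ⟨hM0, hrow, hcol⟩ := mem_doublyStochastic_iff_sum.1 hM
  calc ∑ i, φ ((M *ᵥ x) i) ≤ ∑ i, ∑ j, M i j * φ (x j) :=
        Finset.sum_le_sum fun i _ => by
          simpa [mulVec, dotProduct] using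
            hφ.map_sum_le (t := Finset.univ) (fun j _ => hM0 i j) (hrow i) (fun j _ => hx j)
    _ = ∑ j, φ (x j) := by
        rw [Finset.sum_comm]
        simp_rw [← Finset.sum_mul, hcol, one_mul]

lemma Matrix.normSq_mem_doublyStochastic {U : Matrix n n ℂ} (hU : U ∈ unitaryGroup n ℂ) :
    of (fun i j => Complex.normSq (U i j)) ∈ doublyStochastic ℝ n := by
  have row_sum {V : Matrix n n ℂ} (hV : V ∈ unitaryGroup n ℂ) (i : n) :
      ∑ j, Complex.normSq (V i j) = 1 := by
    have := congrArg (fun A : Matrix n n ℂ => (A i i).re) (mem_unitaryGroup_iff.1 hV)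
    simpa [mul_apply, Complex.mul_conj, Complex.re_sum] using this
  refine mem_doublyStochastic_iff_sum.2
    ⟨fun i j => Complex.normSq_nonneg _, fun i => by simpa using row_sum hU i, fun j => ?_⟩
  simpa using row_sum (Unitary.star_mem hU) j

lemma Matrix.re_mul_diagonal_mul_star_apply_self (S : Matrix n n ℂ) (v : n → ℝ) (i : n) :
    ((S * diagonal (RCLike.ofReal ∘ v : n → ℂ) * star S) i i).re =
      (of (fun i j => Complex.normSq (S i j)) *ᵥ v) i := by
  rw [mul_apply]
  simp only [mul_diagonal, star_apply, mulVec, dotProduct, of_apply, Complex.re_sum]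
  refine Finset.sum_congr rfl fun j _ => ?_
  rw [mul_right_comm, Complex.star_def, Complex.mul_conj]
  simp

end DoublyStochastic

namespace Matrix.IsHermitian

variable {n : Type*} [Fintype n] [DecidableEq n] {A : Matrix n n ℂ}

lemma traceFun_eq_sum (hA : A.IsHermitian) (g : ℝ → ℝ) :
    traceFun g A = ∑ i, g (hA.eigenvalues i) :=
  dif_pos hA

lemma re_trace_mul_eq_sum (hA : A.IsHermitian) (B : Matrix n n ℂ) :
    (trace (A * B)).re = ∑ i, hA.eigenvalues i *
      ((star (hA.eigenvectorUnitary : Matrix n n ℂ) * B * hA.eigenvectorUnitary) i i).re := by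
  conv_lhs => rw [hA.spectral_theorem, Unitary.conjStarAlgAut_apply, Matrix.mul_assoc,
    trace_mul_comm, ← Matrix.mul_assoc]
  simp [trace, mul_diagonal, Complex.re_sum, mul_comm]

lemma traceFun_cfc (hA : A.IsHermitian) (f g : ℝ → ℝ) :
    traceFun g (cfc f A) = ∑ i, g (f (hA.eigenvalues i)) := by
  have hB : (cfc f A).IsHermitian := cfc_predicate f A
  have hroots := hB.roots_charpoly_eq_eigenvalues
  rw [hA.charpoly_cfc_eq, Polynomial.roots_prod _ _
    (by simp [Finset.prod_ne_zero_iff, Polynomial.X_sub_C_ne_zero])] at hroots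
  have hmap : Finset.univ.val.map hB.eigenvalues = Finset.univ.val.map (f ∘ hA.eigenvalues) := by
    apply Multiset.map_injective Complex.ofReal_injective
    simpa [Multiset.map_map, Polynomial.roots_X_sub_C] using hroots.symm
  rw [hB.traceFun_eq_sum]
  simpa [Multiset.map_map] using congrArg (fun s => (s.map g).sum) hmap

lemma re_trace_cfc (hA : A.IsHermitian) (f : ℝ → ℝ) :
    (trace (cfc f A)).re = ∑ i, f (hA.eigenvalues i) := by
  have hB : (cfc f A).IsHermitian := cfc_predicate f A
  rw [hB.trace_eq_sum_eigenvalues, Complex.re_sum]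
  simpa [hB.traceFun_eq_sum] using hA.traceFun_cfc f id

end Matrix.IsHermitian

section Peierls

variable {n : Type*} [Fintype n] [DecidableEq n]

theorem ConvexOn.sum_map_re_diag_conj_le_traceFun {s : Set ℝ} {φ : ℝ → ℝ}
    (hφ : ConvexOn ℝ s φ) {A : Matrix n n ℂ} (hA : A.IsHermitian) (hs : ∀ i, hA.eigenvalues i ∈ s)
    {U : Matrix n n ℂ} (hU : U ∈ unitaryGroup n ℂ) :
    ∑ i, φ ((star U * A * U) i i).re ≤ traceFun φ A := by
  set V : Matrix n n ℂ := ↑hA.eigenvectorUnitary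
  have hconj : star U * A * U =
      (star U * V) * diagonal (RCLike.ofReal ∘ hA.eigenvalues : n → ℂ) * star (star U * V) := by
    conv_lhs => rw [hA.spectral_theorem]
    simp [V, star_mul, Matrix.mul_assoc]
  have hSV : star U * V ∈ unitaryGroup n ℂ :=
    Submonoid.mul_mem _ (Unitary.star_mem hU) hA.eigenvectorUnitary.2
  simp_rw [hconj, Matrix.re_mul_diagonal_mul_star_apply_self, hA.traceFun_eq_sum]
  exact hφ.sum_map_mulVec_le (Matrix.normSq_mem_doublyStochastic hSV) hs

end Peierls

section Variational

open scoped MatrixOrder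

variable {n : Type*} [Fintype n] [DecidableEq n] {φ : ℝ → ℝ} {W : Matrix n n ℂ}

theorem re_trace_mul_sub_traceFun_le (hconv : ConvexOn ℝ (Set.Ici 0) φ)
    (hsl : Tendsto (fun x => φ x / x) atTop atTop) (hW : W.IsHermitian)
    {π : Matrix n n ℂ} (hπ : π.PosSemidef) :
    (trace (W * π)).re - traceFun φ π ≤ traceFun (legendre φ) W := by
  set U : Matrix n n ℂ := ↑hW.eigenvectorUnitary
  set q : n → ℝ := fun i => ((star U * π * U) i i).re
  have hq : ∀ i, 0 ≤ q i := fun i =>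
    Complex.nonneg_iff.1 ((hπ.conjTranspose_mul_mul_same U).diag_nonneg) |>.1
  have hpeierls : ∑ i, φ (q i) ≤ traceFun φ π :=
    hconv.sum_map_re_diag_conj_le_traceFun hπ.1 hπ.eigenvalues_nonneg hW.eigenvectorUnitary.2
  rw [hW.re_trace_mul_eq_sum, hW.traceFun_eq_sum]
  calc ∑ i, hW.eigenvalues i * q i - traceFun φ π
      ≤ ∑ i, (hW.eigenvalues i * q i - φ (q i)) := by
        rw [Finset.sum_sub_distrib]; linarith
    _ ≤ ∑ i, legendre φ (hW.eigenvalues i) :=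
        Finset.sum_le_sum fun i _ => le_legendre hconv hsl _ (hq i)

theorem exists_posSemidef_traceFun_legendre_sub_lt (hW : W.IsHermitian) {ε : ℝ} (hε : 0 < ε) :
    ∃ π : Matrix n n ℂ, π.PosSemidef ∧
      traceFun (legendre φ) W - ε < (trace (W * π)).re - traceFun φ π := by
  set δ := ε / (Fintype.card n + 1)
  have hδ : 0 < δ := by positivity
  choose x hx0 hx using fun t => exists_nonneg_legendre_sub_lt (φ := φ) t hδ
  refine ⟨cfc x W, nonneg_iff_posSemidef.1 (cfc_nonneg fun t _ => hx0 t), ?_⟩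
  have hWπ : W * cfc x W = cfc (fun t => t * x t) W := by
    rw [cfc_mul _ _ W (hg := W.finite_real_spectrum.continuousOn x), cfc_id' ℝ W]
  rw [hWπ, hW.re_trace_cfc, hW.traceFun_cfc, hW.traceFun_eq_sum, ← Finset.sum_sub_distrib]
  have hcard : (Fintype.card n : ℝ) * δ < ε := by
    rw [mul_div_assoc', div_lt_iff₀ (by positivity)]; linarith
  calc ∑ i, legendre φ (hW.eigenvalues i) - ε
      < ∑ i, (legendre φ (hW.eigenvalues i) - δ) := by
        simp only [Finset.sum_sub_distrib, Finset.sum_const, Finset.card_univ, nsmul_eq_mul]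
        linarith
    _ ≤ _ := Finset.sum_le_sum fun i _ => (hx _).le

end Variational

/-- `sup_{π ⪰ 0} (Tr[Wπ] - Tr[φ(π)]) = Tr[ψ(W)]` where `ψ = φ*`. -/
theorem stmt3 {d : ℕ} (φ : ℝ → ℝ) (hconv : ConvexOn ℝ (Set.Ici 0) φ)
    (hsl : Tendsto (fun t => φ t / t) atTop atTop)
    (W : Matrix (Fin d) (Fin d) ℂ) (hW : W.IsHermitian) :
    IsLUB {r : ℝ | ∃ π : Matrix (Fin d) (Fin d) ℂ, π.PosSemidef ∧
        r = (Matrix.trace (W * π)).re - traceFun φ π}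
      (traceFun (legendre φ) W) := by
  refine ⟨?_, fun b hb => le_of_forall_pos_lt_add fun ε hε => ?_⟩
  · rintro _ ⟨π, hπ, rfl⟩
    exact re_trace_mul_sub_traceFun_le hconv hsl hW hπ
  · obtain ⟨π, hπ, hlt⟩ := exists_posSemidef_traceFun_legendre_sub_lt hW hε
    linarith [hb ⟨π, hπ, rfl⟩]
end

section
/- Let ψ: ℝ → ℝ be strictly convex, and suppose that π is positive semidefinite Hermitian, W is Hermitian, and equality Tr[Wπ] = Tr[φ(π)] + Tr[ψ(W)] holds, where φ = ψ* restricted to [0,∞). Then π and W commute. -/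
open scoped ComplexOrder

open Matrix Filter Topology

/-! Diagonalize `π = U diag(p) U*` and `W = V diag(w) V*` and put `Q = U* V`. The matrix
`(|Q i j|²)` is doubly stochastic, `Tr[Wπ] = ∑ |Q i j|² p_i w_j` and
`Tr φ(π) + Tr ψ(W) = ∑ |Q i j|² (φ(p_i) + ψ(w_j))`, so the scalar Fenchel–Young inequalities
`p_i w_j ≤ φ(p_i) + ψ(w_j)` are equalities wherever `Q i j ≠ 0`. Each such `w_j` then maximizes
`t ↦ p_i t - ψ t`, and by strict convexity this maximizer is unique: `w_j = c_i` on the support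
of `Q`. Hence `Q diag(w) = diag(c) Q`, i.e. `U* W U = diag(c)`, which commutes with
`U* π U = diag(p)`. -/

namespace Matrix

variable {n : Type*} [Fintype n] [DecidableEq n]

theorem trace_conjStarAlgAut {R : Type*} [CommRing R] [StarRing R]
    (u : unitaryGroup n R) (A : Matrix n n R) :
    trace (Unitary.conjStarAlgAut R _ u A) = trace A := by
  rw [Unitary.conjStarAlgAut_apply, trace_mul_cycle, Unitary.coe_star_mul_self, one_mul]

theorem normSq_mem_doublyStochastic_s4 (Q : unitaryGroup n ℂ) :
    of (fun i j ↦ Complex.normSq (Q i j)) ∈ doublyStochastic ℝ n := by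
  have hrow (i : n) : ∑ j, (Complex.normSq (Q i j) : ℂ) = 1 := by
    simpa [mul_apply, Complex.mul_conj, one_apply] using
      congr_fun₂ (Unitary.coe_mul_star_self Q) i i
  have hcol (j : n) : ∑ i, (Complex.normSq (Q i j) : ℂ) = 1 := by
    simpa [mul_apply, Complex.normSq_eq_conj_mul_self, one_apply] using
      congr_fun₂ (Unitary.coe_star_mul_self Q) j j
  refine mem_doublyStochastic_iff_sum.2 ⟨fun i j ↦ Complex.normSq_nonneg _, fun i ↦ ?_, fun j ↦ ?_⟩
  · exact_mod_cast hrow i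
  · exact_mod_cast hcol j

theorem re_trace_mul_diagonal_mul_star_mul_diagonal (Q : Matrix n n ℂ) (a b : n → ℝ) :
    (trace (Q * diagonal (RCLike.ofReal ∘ b) * star Q * diagonal (RCLike.ofReal ∘ a))).re =
      ∑ i, ∑ j, Complex.normSq (Q i j) * (a i * b j) := by
  rw [RCLike.ofReal_eq_complex_ofReal, trace, Complex.re_sum]
  refine Finset.sum_congr rfl fun i _ ↦ ?_
  rw [diag_apply, mul_diagonal, mul_apply, Finset.sum_mul, Complex.re_sum]
  refine Finset.sum_congr rfl fun j _ ↦ ?_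
  rw [mul_diagonal, star_apply, Complex.star_def, ← Complex.ofReal_re (Complex.normSq _ * _),
    Complex.ofReal_mul, ← Complex.mul_conj]
  congr 1
  simp only [Function.comp_apply, Complex.ofReal_mul]
  ring

theorem eq_add_of_sum_mul_eq_of_mem_doublyStochastic {R : Type*} [Field R] [LinearOrder R]
    [IsStrictOrderedRing R] {S : Matrix n n R} (hS : S ∈ doublyStochastic R n)
    {f : n → n → R} {a b : n → R} (hf : ∀ i j, f i j ≤ a i + b j)
    (hsum : ∑ i, ∑ j, S i j * f i j = ∑ i, a i + ∑ j, b j) {i j : n} (hij : S i j ≠ 0) :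
    f i j = a i + b j := by
  have hsplit : ∑ i, ∑ j, S i j * (a i + b j) = ∑ i, a i + ∑ j, b j := by
    simp_rw [mul_add, Finset.sum_add_distrib, ← Finset.sum_mul]
    rw [Finset.sum_comm (f := fun i j ↦ S i j * b j)]
    simp_rw [← Finset.sum_mul, sum_row_of_mem_doublyStochastic hS,
      sum_col_of_mem_doublyStochastic hS, one_mul]
  have hle (q : n × n) (_ : q ∈ Finset.univ) :
      S q.1 q.2 * f q.1 q.2 ≤ S q.1 q.2 * (a q.1 + b q.2) :=
    mul_le_mul_of_nonneg_left (hf _ _) (nonneg_of_mem_doublyStochastic hS)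
  have heq : ∑ q : n × n, S q.1 q.2 * f q.1 q.2 = ∑ q : n × n, S q.1 q.2 * (a q.1 + b q.2) := by
    rw [Fintype.sum_prod_type, Fintype.sum_prod_type, hsum, hsplit]
  exact mul_left_cancel₀ hij ((Finset.sum_eq_sum_iff_of_le hle).1 heq (i, j) (Finset.mem_univ _))

theorem exists_mul_diagonal_eq_diagonal_mul {m α : Type*} [Fintype m] [DecidableEq m]
    [NonUnitalNonAssocCommSemiring α] {Q : Matrix m n α} {w : n → α}
    (h : ∀ i j j', Q i j ≠ 0 → Q i j' ≠ 0 → w j = w j') :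
    ∃ c : m → α, Q * diagonal w = diagonal c * Q := by
  have (i : m) : ∃ c, ∀ j, Q i j ≠ 0 → w j = c := by
    by_cases hi : ∃ j₀, Q i j₀ ≠ 0
    · obtain ⟨j₀, hj₀⟩ := hi
      exact ⟨w j₀, fun j hj ↦ h i j j₀ hj hj₀⟩
    · exact ⟨0, fun j hj ↦ (hi ⟨j, hj⟩).elim⟩
  choose c hc using this
  refine ⟨c, ext fun i j ↦ ?_⟩
  rw [mul_diagonal, diagonal_mul]
  by_cases hij : Q i j = 0
  · simp [hij]
  · rw [hc i j hij, mul_comm]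

end Matrix

theorem StrictConvexOn.eq_of_mul_eq_add {ψ : ℝ → ℝ} (hψ : StrictConvexOn ℝ Set.univ ψ)
    {x c a b : ℝ} (hc : ∀ t, x * t - ψ t ≤ c) (ha : x * a = c + ψ a) (hb : x * b = c + ψ b) :
    a = b := by
  have hconv := hψ.sub_concaveOn ((LinearMap.mul ℝ ℝ x).concaveOn convex_univ)
  have hmin {s : ℝ} (hs : x * s = c + ψ s) : IsMinOn (ψ - ⇑(LinearMap.mul ℝ ℝ x)) Set.univ s :=
    fun t _ ↦ show ψ s - x * s ≤ ψ t - x * t by linarith [hc t]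
  exact hconv.eq_of_isMinOn (hmin ha) (hmin hb) trivial trivial

/-- Equality in the trace Fenchel–Young inequality with `ψ` strictly convex forces
`π` and `W` to commute.  Here `φ = ψ*` restricted to `[0,∞)`, encoded by the `IsLUB`
hypothesis. -/
theorem stmt4 {d : ℕ} (ψ : ℝ → ℝ) (hψ : StrictConvexOn ℝ Set.univ ψ)
    (φ : ℝ → ℝ) (hφ : ∀ x ∈ Set.Ici (0 : ℝ), IsLUB {y : ℝ | ∃ t : ℝ, y = x * t - ψ t} (φ x))
    (π W : Matrix (Fin d) (Fin d) ℂ) (hπ : π.PosSemidef) (hW : W.IsHermitian)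
    (heq : (Matrix.trace (W * π)).re = traceFun φ π + traceFun ψ W) :
    Commute π W := by
  set p := hπ.isHermitian.eigenvalues
  set w := hW.eigenvalues
  set U := hπ.isHermitian.eigenvectorUnitary
  let Q : unitaryGroup (Fin d) ℂ := star U * hW.eigenvectorUnitary
  let e := Unitary.conjStarAlgAut ℂ (Matrix (Fin d) (Fin d) ℂ) (star U)
  have hπe : e π = diagonal (RCLike.ofReal ∘ p) :=
    hπ.isHermitian.conjStarAlgAut_star_eigenvectorUnitary
  have hWe : e W = (Q : Matrix (Fin d) (Fin d) ℂ) * diagonal (RCLike.ofReal ∘ w) *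
      star (Q : Matrix (Fin d) (Fin d) ℂ) := by
    rw [hW.spectral_theorem, ← Unitary.conjStarAlgAut_mul_apply, Unitary.conjStarAlgAut_apply]
  have hFY (i : Fin d) (t : ℝ) : p i * t - ψ t ≤ φ (p i) :=
    (hφ _ (hπ.eigenvalues_nonneg i)).1 ⟨t, rfl⟩
  have hsum : ∑ i, ∑ j, Complex.normSq (Q i j) * (p i * w j) = ∑ i, φ (p i) + ∑ j, ψ (w j) := by
    rw [← re_trace_mul_diagonal_mul_star_mul_diagonal, ← hWe, ← hπe, ← map_mul,
      trace_conjStarAlgAut, heq, traceFun, traceFun, dif_pos hπ.isHermitian, dif_pos hW]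
  have hFY_eq {i j : Fin d} (hij : Q i j ≠ 0) : p i * w j = φ (p i) + ψ (w j) :=
    eq_add_of_sum_mul_eq_of_mem_doublyStochastic (normSq_mem_doublyStochastic_s4 Q)
      (fun i j ↦ by linarith [hFY i (w j)]) hsum (Complex.normSq_eq_zero.not.2 hij)
  obtain ⟨c, hc⟩ := exists_mul_diagonal_eq_diagonal_mul (Q := (Q : Matrix (Fin d) (Fin d) ℂ))
    (w := RCLike.ofReal ∘ w) fun i j j' hj hj' ↦
      congrArg RCLike.ofReal (hψ.eq_of_mul_eq_add (hFY i) (hFY_eq hj) (hFY_eq hj'))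
  have hWc : e W = diagonal c := by
    rw [hWe, hc, Matrix.mul_assoc, Unitary.mul_star_self_of_mem Q.2, Matrix.mul_one]
  have hcomm := (commute_diagonal (RCLike.ofReal ∘ p) c).map e.symm
  rwa [← hπe, ← hWc, StarAlgEquiv.symm_apply_apply, StarAlgEquiv.symm_apply_apply] at hcomm
end
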